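/- For x, z ∈ ℝ³ with x ≠ 0 and x ≠ z, and λ > 0, define F(λ, x, z) = (1 − e^{(−1−i)λ|x−z|}) / (8π λ |x−z|) − (1 − e^{(−1−i)λ|x|}) / (8π λ |x|). Then there is a constant C such that for all 0 < λ ≤ 1, all such x, z, and each k = 0, 1, 2, |∂_λ^k F(λ, x, z)| ≤ C ⟨z⟩ / (min(⟨x⟩, |x−z|) · λ^k). -/

import Mathlib

open MeasureTheory Real Set Complex

noncomputable section

abbrev E3 := EuclideanSpace ℝ (Fin 3)

/-- Japanese bracket on ℝ³. -/
def jap (x : E3) : ℝ := Real.sqrt (1 + ‖x‖ ^ 2)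

/-- The auxiliary function `F(λ, x, z)`. -/
def F (l : ℝ) (x z : E3) : ℂ :=
  (1 - Complex.exp ((-1 - Complex.I) * l * ‖x - z‖)) / (8 * Real.pi * l * ‖x - z‖) -
    (1 - Complex.exp ((-1 - Complex.I) * l * ‖x‖)) / (8 * Real.pi * l * ‖x‖)

open Topology
open scoped ContDiff Nat

/-!
Write `F(λ) = (g(λ|x-z|) - g(λ|x|)) / 8π` with `g(s) = (1 - e^{cs}) / s`, `c = -1 - i`, so that
`∂_λ^k F = (ψ_k(λ|x-z|) - ψ_k(λ|x|)) / (8π λ^k)` with `ψ_k(s) = s^k g^{(k)}(s)`.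
Differentiating `s g(s) = 1 - e^{cs}` gives `s g^{(k+1)} = -c^{k+1} e^{cs} - (k+1) g^{(k)}`,
so, as `Re c < 0`, every `ψ_k` is bounded on `(0, ∞)`, and so is `s ψ_k' = k ψ_k + ψ_{k+1}`.
A bounded `ψ` with bounded `s ψ'(s)` satisfies `|ψ(a) - ψ(b)| ≲ |a - b| / a`: trivially when
`|a - b| ≥ a/2`, and by the mean value theorem on `[a/2, ∞)` otherwise. For `a = λ|x - z|` and
`b = λ|x|` we have `|a - b| / a ≤ |z| / |x - z| ≤ ⟨z⟩ / min(⟨x⟩, |x - z|)`.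
-/

section IteratedDeriv

variable {𝕜 G : Type*} [NontriviallyNormedField 𝕜] [NormedAddCommGroup G] [NormedSpace 𝕜 G]

theorem iteratedDeriv_eqOn_of_hasDerivAt {f : 𝕜 → G} {Φ : ℕ → 𝕜 → G} {U : Set 𝕜}
    (hU : IsOpen U) (h₀ : EqOn f (Φ 0) U)
    (hΦ : ∀ k, ∀ t ∈ U, HasDerivAt (Φ k) (Φ (k + 1) t) t) (k : ℕ) :
    EqOn (iteratedDeriv k f) (Φ k) U := by
  induction k with
  | zero => simpa using h₀
  | succ k ih =>
    intro t ht
    rw [iteratedDeriv_succ, (ih.eventuallyEq_of_mem (hU.mem_nhds ht)).deriv_eq]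
    exact (hΦ k t ht).deriv

theorem ContDiffOn.hasDerivAt_iteratedDeriv {f : 𝕜 → G} {U : Set 𝕜} (hf : ContDiffOn 𝕜 ∞ f U)
    (hU : IsOpen U) {x : 𝕜} (hx : x ∈ U) (k : ℕ) :
    HasDerivAt (iteratedDeriv k f) (iteratedDeriv (k + 1) f x) x := by
  have hdiff := (hf.differentiableOn_iteratedDerivWithin (m := k)
    (by exact_mod_cast WithTop.coe_lt_top _) hU.uniqueDiffOn x hx).differentiableAt
    (hU.mem_nhds hx)
  have heq := (iteratedDerivWithin_of_isOpen (n := k) (f := f) hU).eventuallyEq_of_mem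
    (hU.mem_nhds hx)
  rw [iteratedDeriv_succ]
  exact (hdiff.congr_of_eventuallyEq heq.symm).hasDerivAt

end IteratedDeriv

theorem norm_sub_le_of_norm_le_of_mul_norm_deriv_le {G : Type*} [NormedAddCommGroup G]
    [NormedSpace ℝ G] {ψ ψ' : ℝ → G} {M K : ℝ}
    (hψ : ∀ s, 0 < s → HasDerivAt ψ (ψ' s) s) (hM : ∀ s, 0 < s → ‖ψ s‖ ≤ M)
    (hK : ∀ s, 0 < s → s * ‖ψ' s‖ ≤ K) {a b : ℝ} (ha : 0 < a) (hb : 0 < b) :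
    ‖ψ a - ψ b‖ ≤ (4 * M + 2 * K) * |a - b| / a := by
  have hM₀ : 0 ≤ M := (norm_nonneg _).trans (hM 1 one_pos)
  have hK₀ : 0 ≤ K := by simpa using (mul_nonneg zero_le_one (norm_nonneg _)).trans (hK 1 one_pos)
  rw [le_div_iff₀ ha]
  rcases le_or_gt a (2 * |a - b|) with hab | hab
  · have : ‖ψ a - ψ b‖ ≤ 2 * M := (norm_sub_le _ _).trans (by linarith [hM a ha, hM b hb])
    nlinarith [abs_nonneg (a - b)]
  · have hmid : ∀ t ∈ uIcc a b, a / 2 < t := fun t ht =>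
      (lt_min (by linarith) (by linarith [le_abs_self (a - b)])).trans_le ht.1
    have hderiv : ∀ t ∈ uIcc a b, ‖ψ' t‖ ≤ 2 * K / a := fun t ht => by
      have := hmid t ht
      rw [le_div_iff₀ ha]
      nlinarith [hK t (by linarith), norm_nonneg (ψ' t)]
    have hmvt := (convex_uIcc a b).norm_image_sub_le_of_norm_hasDerivWithin_le
      (fun t ht => (hψ t (by linarith [hmid t ht])).hasDerivWithinAt) hderiv
      right_mem_uIcc left_mem_uIcc
    rw [Real.norm_eq_abs, div_mul_eq_mul_div, le_div_iff₀ ha] at hmvt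
    nlinarith [abs_nonneg (a - b)]

def scaledIteratedDeriv (k : ℕ) (g : ℝ → ℂ) (s : ℝ) : ℂ := (s : ℂ) ^ k * iteratedDeriv k g s

theorem hasDerivAt_scaledIteratedDeriv {g : ℝ → ℂ} {k : ℕ} {s : ℝ} (hs : s ≠ 0)
    (hg : HasDerivAt (iteratedDeriv k g) (iteratedDeriv (k + 1) g s) s) :
    HasDerivAt (scaledIteratedDeriv k g)
      ((k * scaledIteratedDeriv k g s + scaledIteratedDeriv (k + 1) g s) / s) s := by
  have hs' : (s : ℂ) ≠ 0 := by exact_mod_cast hs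
  refine ((hasDerivAt_pow k (s : ℂ)).comp_ofReal.mul hg).congr_deriv ?_
  rcases k with _ | k
  · simp [scaledIteratedDeriv, hs']
  · simp only [scaledIteratedDeriv]
    push_cast
    field_simp
    ring

theorem add_mul_eq_of_eventually_mul_eq {u v : ℝ → ℂ} {u' v' : ℂ} {s : ℝ}
    (huv : ∀ᶠ t in 𝓝 s, t * u t = v t) (hu : HasDerivAt u u' s) (hv : HasDerivAt v v' s) :
    u s + s * u' = v' := by
  have hmul := ((hasDerivAt_id s).ofReal_comp.mul hu).congr_of_eventuallyEq
    (huv.mono fun t ht => ht.symm)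
  simpa using hmul.unique hv

theorem pow_mul_exp_mul_le {a s : ℝ} (ha : a < 0) (hs : 0 ≤ s) (k : ℕ) :
    s ^ k * Real.exp (a * s) ≤ k ! / (-a) ^ k := by
  have h := Real.pow_div_factorial_le_exp (x := -a * s) (mul_nonneg (neg_nonneg.mpr ha.le) hs) k
  rw [div_le_iff₀ (by positivity), mul_pow] at h
  rw [le_div_iff₀ (pow_pos (neg_pos.mpr ha) k)]
  calc s ^ k * Real.exp (a * s) * (-a) ^ k = (-a) ^ k * s ^ k * Real.exp (a * s) := by ring
    _ ≤ Real.exp (-a * s) * k ! * Real.exp (a * s) := by gcongr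
    _ = k ! := by rw [mul_right_comm, ← Real.exp_add]; simp

section OneSubExpDiv

variable {c : ℂ}

def oneSubExpDiv (c : ℂ) (s : ℝ) : ℂ := (1 - Complex.exp (c * s)) / s

theorem hasDerivAt_cexp_mul_ofReal (t : ℝ) :
    HasDerivAt (fun t : ℝ => Complex.exp (c * t)) (c * Complex.exp (c * t)) t := by
  simpa [mul_comm] using ((hasDerivAt_id t).ofReal_comp.const_mul c).cexp

theorem contDiffOn_oneSubExpDiv : ContDiffOn ℝ ∞ (oneSubExpDiv c) (Ioi 0) := by
  have hofReal : ContDiff ℝ ∞ (fun s : ℝ => (s : ℂ)) := ofRealCLM.contDiff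
  unfold oneSubExpDiv
  simp only [div_eq_mul_inv]
  refine ContDiffOn.mul ?_ (hofReal.contDiffOn.inv fun s hs => ?_)
  · exact (contDiff_const.sub (contDiff_exp.comp (contDiff_const.mul hofReal))).contDiffOn
  · exact_mod_cast (ne_of_gt hs)

theorem hasDerivAt_iteratedDeriv_oneSubExpDiv (k : ℕ) {s : ℝ} (hs : 0 < s) :
    HasDerivAt (iteratedDeriv k (oneSubExpDiv c)) (iteratedDeriv (k + 1) (oneSubExpDiv c) s) s :=
  contDiffOn_oneSubExpDiv.hasDerivAt_iteratedDeriv isOpen_Ioi hs k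

theorem mul_iteratedDeriv_succ_oneSubExpDiv (k : ℕ) {s : ℝ} (hs : 0 < s) :
    s * iteratedDeriv (k + 1) (oneSubExpDiv c) s =
      -c ^ (k + 1) * Complex.exp (c * s) - (k + 1) * iteratedDeriv k (oneSubExpDiv c) s := by
  induction k generalizing s with
  | zero =>
    have h := add_mul_eq_of_eventually_mul_eq (v := fun t => 1 - Complex.exp (c * t))
      ((eventually_gt_nhds hs).mono fun t ht => ?_)
      (hasDerivAt_iteratedDeriv_oneSubExpDiv (c := c) 0 hs)
      ((hasDerivAt_cexp_mul_ofReal s).const_sub 1)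
    · simp only [iteratedDeriv_zero] at h ⊢
      linear_combination h
    · have : (t : ℂ) ≠ 0 := by exact_mod_cast ht.ne'
      simp [oneSubExpDiv, mul_div_cancel₀ _ this]
  | succ k ih =>
    have h := add_mul_eq_of_eventually_mul_eq
      ((eventually_gt_nhds hs).mono fun t ht => ih ht)
      (hasDerivAt_iteratedDeriv_oneSubExpDiv (c := c) (k + 1) hs)
      (((hasDerivAt_cexp_mul_ofReal s).const_mul _).sub
        ((hasDerivAt_iteratedDeriv_oneSubExpDiv k hs).const_mul _))
    push_cast
    linear_combination h

theorem norm_one_sub_exp_mul_le (hc : c.re ≤ 0) {s : ℝ} (hs : 0 ≤ s) :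
    ‖1 - Complex.exp (c * s)‖ ≤ ‖c‖ * s := by
  have h := norm_image_sub_le_of_norm_deriv_le_segment' (C := ‖c‖)
    (fun t _ => (hasDerivAt_cexp_mul_ofReal (c := c) t).hasDerivWithinAt)
    (fun t ht => ?_) s ⟨hs, le_rfl⟩
  · simpa [norm_sub_rev] using h
  · rw [norm_mul, Complex.norm_exp, re_mul_ofReal]
    exact mul_le_of_le_one_right (norm_nonneg c)
      (Real.exp_le_one_iff.mpr (mul_nonpos_of_nonpos_of_nonneg hc ht.1))

theorem norm_oneSubExpDiv_le (hc : c.re ≤ 0) {s : ℝ} (hs : 0 < s) :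
    ‖oneSubExpDiv c s‖ ≤ ‖c‖ := by
  rw [oneSubExpDiv, norm_div, Complex.norm_real, Real.norm_of_nonneg hs.le, div_le_iff₀ hs]
  exact norm_one_sub_exp_mul_le hc hs.le

theorem exists_norm_scaledIteratedDeriv_oneSubExpDiv_le (hc : c.re < 0) (k : ℕ) :
    ∃ B, ∀ s, 0 < s → ‖scaledIteratedDeriv k (oneSubExpDiv c) s‖ ≤ B := by
  induction k with
  | zero =>
    exact ⟨‖c‖, fun s hs => by simpa [scaledIteratedDeriv] using norm_oneSubExpDiv_le hc.le hs⟩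
  | succ k ih =>
    obtain ⟨B, hB⟩ := ih
    refine ⟨‖c‖ ^ (k + 1) * (k ! / (-c.re) ^ k) + (k + 1) * B, fun s hs => ?_⟩
    have hrec : scaledIteratedDeriv (k + 1) (oneSubExpDiv c) s =
        -c ^ (k + 1) * (s ^ k * Complex.exp (c * s)) -
          (k + 1) * scaledIteratedDeriv k (oneSubExpDiv c) s := by
      rw [scaledIteratedDeriv, scaledIteratedDeriv, pow_succ, mul_assoc,
        mul_iteratedDeriv_succ_oneSubExpDiv k hs]
      ring
    have hexp : ‖(s : ℂ) ^ k * Complex.exp (c * s)‖ ≤ k ! / (-c.re) ^ k := by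
      rw [norm_mul, norm_pow, Complex.norm_real, Real.norm_of_nonneg hs.le, Complex.norm_exp,
        re_mul_ofReal]
      exact pow_mul_exp_mul_le hc hs.le k
    rw [hrec]
    refine (norm_sub_le _ _).trans (add_le_add ?_ ?_)
    · rw [norm_mul, norm_neg, norm_pow]
      gcongr
    · rw [norm_mul, show ‖(k + 1 : ℂ)‖ = k + 1 by exact_mod_cast Complex.norm_natCast (k + 1)]
      gcongr
      exact hB s hs

theorem exists_norm_scaledIteratedDeriv_oneSubExpDiv_sub_le (hc : c.re < 0) (k : ℕ) :
    ∃ C, 0 ≤ C ∧ ∀ a b : ℝ, 0 < a → 0 < b →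
      ‖scaledIteratedDeriv k (oneSubExpDiv c) a - scaledIteratedDeriv k (oneSubExpDiv c) b‖ ≤
        C * |a - b| / a := by
  obtain ⟨B, hB⟩ := exists_norm_scaledIteratedDeriv_oneSubExpDiv_le hc k
  obtain ⟨B', hB'⟩ := exists_norm_scaledIteratedDeriv_oneSubExpDiv_le hc (k + 1)
  have hB₀ : 0 ≤ B := (norm_nonneg _).trans (hB 1 one_pos)
  have hB'₀ : 0 ≤ B' := (norm_nonneg _).trans (hB' 1 one_pos)
  have hK (s : ℝ) (hs : 0 < s) : s * ‖(k * scaledIteratedDeriv k (oneSubExpDiv c) s +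
      scaledIteratedDeriv (k + 1) (oneSubExpDiv c) s) / s‖ ≤ k * B + B' := by
    rw [norm_div, Complex.norm_real, Real.norm_of_nonneg hs.le, mul_div_cancel₀ _ hs.ne']
    refine (norm_add_le _ _).trans (add_le_add ?_ (hB' s hs))
    rw [norm_mul, Complex.norm_natCast]
    exact mul_le_mul_of_nonneg_left (hB s hs) k.cast_nonneg
  exact ⟨4 * B + 2 * (k * B + B'), by positivity, fun a b ha hb =>
    norm_sub_le_of_norm_le_of_mul_norm_deriv_le
      (fun s hs => hasDerivAt_scaledIteratedDeriv hs.ne'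
        (hasDerivAt_iteratedDeriv_oneSubExpDiv k hs)) hB hK ha hb⟩

end OneSubExpDiv

theorem norm_le_jap (x : E3) : ‖x‖ ≤ jap x :=
  Real.le_sqrt_of_sq_le (by linarith)

theorem jap_pos (x : E3) : 0 < jap x :=
  Real.sqrt_pos.mpr (by positivity)

theorem F_eq_oneSubExpDiv (t : ℝ) (x z : E3) :
    F t x z =
      (oneSubExpDiv (-1 - I) (t * ‖x - z‖) - oneSubExpDiv (-1 - I) (t * ‖x‖)) / (8 * π) := by
  simp only [F, oneSubExpDiv, sub_div, div_div]
  push_cast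
  ring_nf

theorem iteratedDeriv_F {x z : E3} (hx : x ≠ 0) (hxz : x ≠ z) (k : ℕ) {t : ℝ} (ht : 0 < t) :
    iteratedDeriv k (fun t => F t x z) t =
      ((‖x - z‖ : ℂ) ^ k * iteratedDeriv k (oneSubExpDiv (-1 - I)) (t * ‖x - z‖) -
        (‖x‖ : ℂ) ^ k * iteratedDeriv k (oneSubExpDiv (-1 - I)) (t * ‖x‖)) / (8 * π) := by
  have hrescaled (j : ℕ) {r : ℝ} (hr : 0 < r) {t : ℝ} (ht : 0 < t) :
      HasDerivAt (fun t : ℝ => (r : ℂ) ^ j * iteratedDeriv j (oneSubExpDiv (-1 - I)) (t * r))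
        ((r : ℂ) ^ (j + 1) * iteratedDeriv (j + 1) (oneSubExpDiv (-1 - I)) (t * r)) t := by
    refine (((hasDerivAt_iteratedDeriv_oneSubExpDiv j (mul_pos ht hr)).scomp t
      ((hasDerivAt_id t).mul_const r)).const_mul ((r : ℂ) ^ j)).congr_deriv ?_
    simp only [Complex.real_smul, one_mul]
    ring
  refine iteratedDeriv_eqOn_of_hasDerivAt isOpen_Ioi (fun t _ => ?_)
    (fun j t ht => ((hrescaled j (norm_pos_iff.mpr (sub_ne_zero.mpr hxz)) ht).sub
      (hrescaled j (norm_pos_iff.mpr hx) ht)).div_const _) k ht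
  simp [F_eq_oneSubExpDiv]

theorem exists_norm_iteratedDeriv_F_le (k : ℕ) :
    ∃ C, ∀ l : ℝ, 0 < l → ∀ x z : E3, x ≠ 0 → x ≠ z →
      ‖iteratedDeriv k (fun t => F t x z) l‖ ≤ C * jap z / (min (jap x) ‖x - z‖ * l ^ k) := by
  obtain ⟨C, hC₀, hC⟩ :=
    exists_norm_scaledIteratedDeriv_oneSubExpDiv_sub_le (c := -1 - I) (by simp) k
  refine ⟨C, fun l hl x z hx hxz => ?_⟩
  have hr : 0 < ‖x - z‖ := norm_pos_iff.mpr (sub_ne_zero.mpr hxz)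
  have hlk : 0 < l ^ k := pow_pos hl k
  set ψ := scaledIteratedDeriv k (oneSubExpDiv (-1 - I))
  have hrescale : iteratedDeriv k (fun t => F t x z) l =
      (ψ (l * ‖x - z‖) - ψ (l * ‖x‖)) / (l ^ k * (8 * π)) := by
    have : (l : ℂ) ^ k ≠ 0 := pow_ne_zero k (by exact_mod_cast hl.ne')
    rw [iteratedDeriv_F hx hxz k hl]
    simp only [ψ, scaledIteratedDeriv]
    push_cast
    field_simp
    ring
  have hratio : |l * ‖x - z‖ - l * ‖x‖| / (l * ‖x - z‖) ≤ jap z / min (jap x) ‖x - z‖ := by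
    rw [← mul_sub, abs_mul, abs_of_pos hl, mul_div_mul_left _ _ hl.ne']
    calc |‖x - z‖ - ‖x‖| / ‖x - z‖ ≤ jap z / ‖x - z‖ := by
          gcongr
          exact (abs_norm_sub_norm_le (x - z) x).trans (by simpa using norm_le_jap z)
      _ ≤ jap z / min (jap x) ‖x - z‖ := by
          gcongr
          · exact (jap_pos z).le
          · exact lt_min (jap_pos x) hr
          · exact min_le_right _ _
  have h8π : 1 ≤ ‖(8 * π : ℂ)‖ := by
    rw [norm_mul, Complex.norm_real, Real.norm_of_nonneg pi_pos.le, Complex.norm_ofNat]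
    linarith [pi_gt_three]
  rw [hrescale, norm_div, norm_mul, norm_pow, Complex.norm_real, Real.norm_of_nonneg hl.le]
  calc ‖ψ (l * ‖x - z‖) - ψ (l * ‖x‖)‖ / (l ^ k * ‖(8 * π : ℂ)‖)
      ≤ ‖ψ (l * ‖x - z‖) - ψ (l * ‖x‖)‖ / l ^ k := by
        gcongr
        exact le_mul_of_one_le_right hlk.le h8π
    _ ≤ C * (|l * ‖x - z‖ - l * ‖x‖| / (l * ‖x - z‖)) / l ^ k := by
        rw [← mul_div_assoc]
        gcongr
        exact hC _ _ (mul_pos hl hr) (mul_pos hl (norm_pos_iff.mpr hx))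
    _ ≤ C * (jap z / min (jap x) ‖x - z‖) / l ^ k := by gcongr
    _ = C * jap z / (min (jap x) ‖x - z‖ * l ^ k) := by ring

theorem stmt7 :
    ∃ C : ℝ, ∀ (l : ℝ), 0 < l → l ≤ 1 → ∀ (x z : E3), x ≠ 0 → x ≠ z → ∀ k : ℕ, k ≤ 2 →
      ‖iteratedDeriv k (fun t : ℝ => F t x z) l‖
        ≤ C * jap z / (min (jap x) ‖x - z‖ * l ^ k) := by
  choose C hC using exists_norm_iteratedDeriv_F_le
  refine ⟨max (C 0) (max (C 1) (C 2)), fun l hl _ x z hx hxz k hk =>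
    (hC k l hl x z hx hxz).trans ?_⟩
  have hCk : C k ≤ max (C 0) (max (C 1) (C 2)) := by interval_cases k <;> simp
  have := jap_pos x
  have := jap_pos z
  gcongr

end
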